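/- Sorted odd-even tree structure: in a sorted odd-even labeled tree T with vertices ordered v_1, ..., v_{r+1} (by the recursive order from splitting along edges), every odd-degree vertex precedes every even-degree vertex; i.e., if β_T(v_i) ≡ 1 (mod 2) and β_T(v_j) ≡ 0 (mod 2) then i < j. Moreover there exist integers r ≥ s_1 ≥ s_2 ≥ ... ≥ s_o = 0 (o the number of odd vertices) such that σ_T(v_i) = {star'_{s_i+1}, ..., star'_{s_{i-1}}} for 1 ≤ i ≤ o and σ_T(v_i) = ∅ for i > o. -/

import Mathlib

/-!
A connected graph with one edge fewer than vertices is a tree, so deleting an edge `a` leaves two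
components, those of `tail a` and of `head a`. For `u ≠ w` let `a` be the largest edge separating
them. Some edge at `u` separates `u` from `w` (the first edge of the path from `u` to `w`), so it is
at most `a`; and by sortedness (i) the edges below `a`, with their endpoints, lie in one component
of the tree without `a`. If `u` is odd (only a tail), `w` even (only a head) and `u` were on the
head side of `a`, then separating edges at `u` and at `w` would both lie below `a` and join `u` to
`w` without `a`; hence `u` is on the tail side and precedes `w`. The same argument together with
sortedness (ii) shows that `tail` is antitone in the edge label, so the `σ(v)` are consecutive
intervals, cut at `s_i = #{a | i ≤ tail a}`.
-/

open Finset

theorem Fin.mem_iff_val_lt_card_of_isLowerSet {n : ℕ} {S : Finset (Fin n)}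
    (hS : IsLowerSet (S : Set (Fin n))) (v : Fin n) : v ∈ S ↔ (v : ℕ) < #S := by
  constructor
  · intro hv
    have := card_le_card fun w hw => hS (mem_Iic.1 hw) hv
    rw [Fin.card_Iic] at this
    omega
  · intro hv
    by_contra hvS
    have := card_le_card fun w hw => mem_Iio.2 (lt_of_not_ge fun hvw => hvS (hS hvw hw))
    rw [Fin.card_Iio] at this
    omega

namespace SimpleGraph

variable {V : Type*}

theorem Reachable.mem_of_adj_closed {G : SimpleGraph V} {S : Set V}
    (hS : ∀ x y, G.Adj x y → x ∈ S → y ∈ S) {u v : V} (h : G.Reachable u v) (hu : u ∈ S) :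
    v ∈ S := by
  rw [reachable_iff_reflTransGen] at h
  induction h with
  | refl => exact hu
  | tail _ hxy ih => exact hS _ _ hxy ih

theorem Reachable.of_sym2_eq {G : SimpleGraph V} {x y x' y' : V} (h : s(x, y) = s(x', y'))
    (hr : G.Reachable x y) : G.Reachable x' y' := by
  rcases Sym2.eq_iff.1 h with ⟨rfl, rfl⟩ | ⟨rfl, rfl⟩
  exacts [hr, hr.symm]

end SimpleGraph

open SimpleGraph

namespace SortedOddEvenTree

variable {V E : Type*}

def spanned (tail head : E → V) (p : E → Prop) : SimpleGraph V :=
  fromRel fun u w => ∃ c, p c ∧ tail c = u ∧ head c = w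

variable {tail head : E → V}

theorem spanned_adj {p : E → Prop} {x y : V} :
    (spanned tail head p).Adj x y ↔ x ≠ y ∧ ∃ c, p c ∧ s(tail c, head c) = s(x, y) := by
  simp only [spanned, fromRel_adj, Sym2.eq_iff]
  constructor
  · rintro ⟨hne, ⟨c, hc, h⟩ | ⟨c, hc, h⟩⟩
    exacts [⟨hne, c, hc, Or.inl h⟩, ⟨hne, c, hc, Or.inr h⟩]
  · rintro ⟨hne, c, hc, h | h⟩
    exacts [⟨hne, Or.inl ⟨c, hc, h⟩⟩, ⟨hne, Or.inr ⟨c, hc, h⟩⟩]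

theorem spanned_mono {p q : E → Prop} (hpq : ∀ c, p c → q c) :
    spanned tail head p ≤ spanned tail head q := by
  intro x y h
  obtain ⟨hne, c, hc, he⟩ := spanned_adj.1 h
  exact spanned_adj.2 ⟨hne, c, hpq c hc, he⟩

theorem reachable_tail_head {p : E → Prop} {c : E} (hc : p c) :
    (spanned tail head p).Reachable (tail c) (head c) := by
  by_cases h : tail c = head c
  · rw [h]
  · exact (spanned_adj.2 ⟨h, c, hc, rfl⟩).reachable

theorem reachable_of_mem_sym2 {p : E → Prop} {c : E} {x : V} (hc : p c)
    (hx : x ∈ s(tail c, head c)) : (spanned tail head p).Reachable (tail c) x := by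
  rcases Sym2.mem_iff.1 hx with rfl | rfl
  exacts [Reachable.refl _, reachable_tail_head hc]

theorem adj_spanned_ne_or {x y : V} (h : (spanned tail head fun _ => True).Adj x y) (a : E) :
    (spanned tail head (· ≠ a)).Adj x y ∨ s(tail a, head a) = s(x, y) := by
  obtain ⟨hne, c, -, he⟩ := spanned_adj.1 h
  rcases eq_or_ne c a with rfl | hca
  exacts [Or.inr he, Or.inl (spanned_adj.2 ⟨hne, c, hca, he⟩)]

theorem reachable_tail_or_head (hconn : (spanned tail head fun _ => True).Connected)
    (a : E) (v : V) :
    (spanned tail head (· ≠ a)).Reachable v (tail a) ∨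
      (spanned tail head (· ≠ a)).Reachable v (head a) := by
  set H := spanned tail head (· ≠ a)
  refine (hconn.preconnected (tail a) v).mem_of_adj_closed
    (S := {v | H.Reachable v (tail a) ∨ H.Reachable v (head a)}) (fun x y hxy hx => ?_)
    (Or.inl Reachable.rfl)
  rcases adj_spanned_ne_or hxy a with h | h
  · exact hx.imp (h.reachable.symm.trans ·) (h.reachable.symm.trans ·)
  · rcases Sym2.mem_iff.1 (h ▸ Sym2.mem_mk_right x y : y ∈ s(tail a, head a)) with rfl | rfl
    exacts [Or.inl Reachable.rfl, Or.inr Reachable.rfl]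

theorem not_reachable_tail_head [Finite E] (hconn : (spanned tail head fun _ => True).Connected)
    (hcard : Nat.card V = Nat.card E + 1) (a : E) :
    ¬ (spanned tail head (· ≠ a)).Reachable (tail a) (head a) := by
  intro hreach
  set H := spanned tail head (· ≠ a)
  have hH : H.Connected := by
    have := hconn.nonempty
    refine ⟨fun u v => (hconn.preconnected u v).mem_of_adj_closed (S := {v | H.Reachable u v})
      (fun x y hxy hx => ?_) Reachable.rfl⟩
    rcases adj_spanned_ne_or hxy a with h | h
    exacts [hx.trans h.reachable, hx.trans (hreach.of_sym2_eq h)]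
  have hedges : H.edgeSet ⊆ (fun c => s(tail c, head c)) '' {a}ᶜ := by
    intro e
    induction e using Sym2.ind with
    | _ x y =>
      intro he
      obtain ⟨-, c, hc, he⟩ := spanned_adj.1 he
      exact ⟨c, hc, he⟩
  have hcount : H.edgeSet.ncard ≤ Nat.card E - 1 := calc
    H.edgeSet.ncard ≤ ((fun c => s(tail c, head c)) '' {a}ᶜ).ncard :=
      Set.ncard_le_ncard hedges (Set.toFinite _)
    _ ≤ ({a}ᶜ : Set E).ncard := Set.ncard_image_le
    _ = Nat.card E - 1 := by rw [Set.ncard_compl, Set.ncard_singleton]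
  have := hH.card_vert_le_card_edgeSet_add_one
  rw [Nat.card_coe_set_eq] at this
  have : 0 < Nat.card E := Nat.card_pos_iff.2 ⟨⟨a⟩, inferInstance⟩
  omega

theorem reachable_spanned_ne_of_walk {x : V} {c : E} (hc : x ∈ s(tail c, head c)) {u v : V}
    (p : (spanned tail head fun _ => True).Walk u v) (hx : x ∉ p.support) :
    (spanned tail head (· ≠ c)).Reachable u v := by
  induction p with
  | nil => exact Reachable.rfl
  | cons h q ih =>
    rw [Walk.support_cons, List.mem_cons, not_or] at hx
    refine Reachable.trans ?_ (ih hx.2)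
    rcases adj_spanned_ne_or h c with h' | h'
    · exact h'.reachable
    · rw [h', Sym2.mem_iff] at hc
      rcases hc with rfl | rfl
      exacts [absurd rfl hx.1, absurd q.start_mem_support hx.2]

theorem exists_incident_not_reachable [Finite E]
    (hconn : (spanned tail head fun _ => True).Connected) (hcard : Nat.card V = Nat.card E + 1)
    {x y : V} (hxy : x ≠ y) :
    ∃ b, x ∈ s(tail b, head b) ∧ ¬ (spanned tail head (· ≠ b)).Reachable x y := by
  classical
  obtain ⟨p, hp⟩ := (hconn.preconnected x y).some.toPath
  cases p with
  | nil => exact absurd rfl hxy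
  | @cons _ v _ hadj q =>
    obtain ⟨-, hxq⟩ := (Walk.cons_isPath_iff hadj q).1 hp
    obtain ⟨-, b, -, hb⟩ := spanned_adj.1 hadj
    have hxb : x ∈ s(tail b, head b) := hb ▸ Sym2.mem_mk_left x v
    refine ⟨b, hxb, fun hreach => not_reachable_tail_head hconn hcard b ?_⟩
    exact (hreach.trans (reachable_spanned_ne_of_walk hxb q hxq).symm).of_sym2_eq hb.symm

section Ordered

variable [LinearOrder E]

variable (tail head) in
def IsMaxSeparating (a : E) (u w : V) : Prop :=
  ¬ (spanned tail head (· ≠ a)).Reachable u w ∧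
    ∀ b, a < b → (spanned tail head (· ≠ b)).Reachable u w

theorem IsMaxSeparating.symm {a : E} {u w : V} (h : IsMaxSeparating tail head a u w) :
    IsMaxSeparating tail head a w u :=
  ⟨fun hr => h.1 hr.symm, fun b hb => (h.2 b hb).symm⟩

theorem IsMaxSeparating.le {a b : E} {u w : V} (h : IsMaxSeparating tail head a u w)
    (hb : ¬ (spanned tail head (· ≠ b)).Reachable u w) : b ≤ a :=
  le_of_not_gt fun hab => hb (h.2 b hab)

variable (tail head) in
def IsRecursiveOrder [LinearOrder V] : Prop :=
  ∀ a u w, IsMaxSeparating tail head a u w → (spanned tail head (· ≠ a)).Reachable u (tail a) →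
    u < w

theorem reachable_of_incident_lt
    (hsorted₁ : ∀ a b : E, b ≤ a → (spanned tail head (· ≤ a)).Reachable (tail b) (tail a))
    {a b c : E} (hb : b < a) (hc : c < a) {x y : V} (hx : x ∈ s(tail b, head b))
    (hy : y ∈ s(tail c, head c)) : (spanned tail head (· ≠ a)).Reachable x y := by
  have hmono : spanned tail head (· ≤ max b c) ≤ spanned tail head (· ≠ a) :=
    spanned_mono fun d hd => (hd.trans_lt (max_lt hb hc)).ne
  exact (reachable_of_mem_sym2 (p := (· ≠ a)) hb.ne hx).symm.trans <|
    ((hsorted₁ _ b (le_max_left b c)).mono hmono).trans <|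
    ((hsorted₁ _ c (le_max_right b c)).mono hmono).symm.trans
    (reachable_of_mem_sym2 (p := (· ≠ a)) hc.ne hy)

variable [Finite E]

theorem exists_isMaxSeparating (hconn : (spanned tail head fun _ => True).Connected)
    (hcard : Nat.card V = Nat.card E + 1) {u w : V} (huw : u ≠ w) :
    ∃ a, IsMaxSeparating tail head a u w := by
  obtain ⟨b, -, hb⟩ := exists_incident_not_reachable hconn hcard huw
  obtain ⟨a, ha, hmax⟩ :=
    (Set.toFinite {b | ¬ (spanned tail head (· ≠ b)).Reachable u w}).exists_maximal ⟨b, hb⟩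
  exact ⟨a, ha, fun b hab => by_contra fun hb => (hmax hb hab.le).not_gt hab⟩

theorem IsMaxSeparating.exists_lt_incident (hconn : (spanned tail head fun _ => True).Connected)
    (hcard : Nat.card V = Nat.card E + 1) {a : E} {u w : V} (h : IsMaxSeparating tail head a u w)
    (hu : u ∉ s(tail a, head a)) : ∃ b < a, u ∈ s(tail b, head b) := by
  have huw : u ≠ w := by
    rintro rfl
    exact h.1 Reachable.rfl
  obtain ⟨b, hub, hb⟩ := exists_incident_not_reachable hconn hcard huw
  exact ⟨b, (h.le hb).lt_of_ne (by rintro rfl; exact hu hub), hub⟩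

variable [LinearOrder V]

theorem lt_of_forall_head_ne_of_forall_tail_ne
    (hconn : (spanned tail head fun _ => True).Connected) (hcard : Nat.card V = Nat.card E + 1)
    (hsorted₁ : ∀ a b : E, b ≤ a → (spanned tail head (· ≤ a)).Reachable (tail b) (tail a))
    (horder : IsRecursiveOrder tail head) {u w : V} (hu : ∀ c, head c ≠ u)
    (hw : ∀ c, tail c ≠ w) (huw : u ≠ w) : u < w := by
  obtain ⟨a, ha⟩ := exists_isMaxSeparating hconn hcard huw
  refine horder a u w ha (by_contra fun hut => ?_)
  have huh := (reachable_tail_or_head hconn a u).resolve_left hut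
  obtain ⟨b, hb, hub⟩ := ha.exists_lt_incident hconn hcard (by
    rw [Sym2.mem_iff]
    rintro (h | h)
    exacts [hut (by rw [h]), hu a h.symm])
  obtain ⟨c, hc, hwc⟩ := ha.symm.exists_lt_incident hconn hcard (by
    rw [Sym2.mem_iff]
    rintro (h | h)
    exacts [hw a h.symm, ha.1 (by rwa [h])])
  exact ha.1 (reachable_of_incident_lt hsorted₁ hb hc hub hwc)

theorem tail_antitone
    (hconn : (spanned tail head fun _ => True).Connected) (hcard : Nat.card V = Nat.card E + 1)
    (hbip : ∀ a b, tail a ≠ head b)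
    (hsorted₁ : ∀ a b : E, b ≤ a → (spanned tail head (· ≤ a)).Reachable (tail b) (tail a))
    (hsorted₂ : ∀ i j c : E, tail i = tail j → i ≤ c → c ≤ j → tail c = tail i)
    (horder : IsRecursiveOrder tail head) : Antitone tail := by
  refine antitone_iff_forall_lt.2 fun c d hcd => ?_
  by_contra! hlt
  obtain ⟨a, ha⟩ := exists_isMaxSeparating hconn hcard hlt.ne
  have hdt : ¬ (spanned tail head (· ≠ a)).Reachable (tail d) (tail a) := fun h =>
    (horder a _ _ ha.symm h).not_gt hlt
  obtain ⟨b, hb, hdb⟩ := ha.symm.exists_lt_incident hconn hcard (by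
    rw [Sym2.mem_iff]
    rintro (h | h)
    exacts [hdt (by rw [h]), hbip d a h])
  have htb : tail b = tail d := by
    rcases Sym2.mem_iff.1 hdb with h | h
    exacts [h.symm, absurd h (hbip d b)]
  have hat : tail a = tail c := by
    by_contra hca
    obtain ⟨b', hb', hcb'⟩ := ha.exists_lt_incident hconn hcard (by
      rw [Sym2.mem_iff]
      rintro (h | h)
      exacts [hca h.symm, hbip c a h])
    exact ha.1 (reachable_of_incident_lt hsorted₁ hb' hb hcb' hdb)
  have hda : d < a := lt_of_not_ge fun had =>
    hlt.ne (hat.symm.trans ((hsorted₂ b d a htb hb.le had).trans htb))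
  have hac : a ≤ c := le_of_not_gt fun hca =>
    ha.1 (reachable_of_incident_lt hsorted₁ hca hb (Sym2.mem_mk_left _ _) hdb)
  exact (hcd.trans (hda.trans_le hac)).false

end Ordered

theorem exists_consecutive_fibers_of_antitone {r n : ℕ} {f : Fin r → ℕ} (hf : Antitone f)
    (hn : ∀ a, f a < n) :
    ∃ s : ℕ → ℕ, s 0 = r ∧ (∀ i, s (i + 1) ≤ s i) ∧ s n = 0 ∧
      ∀ v, univ.filter (fun a => f a = v) =
        univ.filter (fun a : Fin r => s (v + 1) ≤ a ∧ (a : ℕ) < s v) := by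
  set s := fun i => #(univ.filter fun a => i ≤ f a)
  have hs : ∀ i a, i ≤ f a ↔ (a : ℕ) < s i := fun i a => by
    rw [← Fin.mem_iff_val_lt_card_of_isLowerSet, mem_filter]
    · simp
    · intro a b hba ha
      simp only [coe_filter, mem_univ, true_and] at ha ⊢
      exact ha.trans (hf hba)
  refine ⟨s, by simp [s], fun i => card_le_card fun a => ?_, ?_, fun v => ?_⟩
  · simp only [mem_filter, mem_univ, true_and]
    omega
  · exact card_eq_zero.2 (filter_eq_empty_iff.2 fun a _ => (hn a).not_ge)
  · ext a
    simp only [mem_filter, mem_univ, true_and]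
    have := hs v a
    have := hs (v + 1) a
    omega

end SortedOddEvenTree

open SortedOddEvenTree

theorem sorted_odd_even_tree_structure_general (r : ℕ)
    (tail head : Fin r → Fin (r + 1)) (β : Fin (r + 1) → ℕ)
    (hconn : (SimpleGraph.fromRel
        (fun u w => ∃ a, tail a = u ∧ head a = w)).Connected)
    -- odd-even: tails are odd-degree vertices, heads are even-degree vertices
    (hoe : ∀ a, β (tail a) % 2 = 1 ∧ β (head a) % 2 = 0)
    -- sorted (i): the subgraph spanned by the edges `≤ a` is connected
    (hsorted₁ : ∀ a b : Fin r, b ≤ a →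
      (SimpleGraph.fromRel
          (fun u w => ∃ c : Fin r, c ≤ a ∧ tail c = u ∧ head c = w)).Reachable
        (tail b) (tail a))
    -- sorted (ii): each σ(v) is an interval of edge labels
    (hsorted₂ : ∀ i j c : Fin r, tail i = tail j → i ≤ c → c ≤ j →
      tail c = tail i)
    -- recursive order: if `a` is the largest edge separating `u` from `w` and `u`
    -- lies in the tail-side component of `a`, then `u` comes before `w`
    (horder : ∀ (a : Fin r) (u w : Fin (r + 1)),
      ¬ (SimpleGraph.fromRel
          (fun x y => ∃ c : Fin r, c ≠ a ∧ tail c = x ∧ head c = y)).Reachable u w →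
      (∀ b : Fin r, a < b →
        (SimpleGraph.fromRel
            (fun x y => ∃ c : Fin r, c ≠ b ∧ tail c = x ∧ head c = y)).Reachable u w) →
      (SimpleGraph.fromRel
          (fun x y => ∃ c : Fin r, c ≠ a ∧ tail c = x ∧ head c = y)).Reachable
        u (tail a) →
      u < w) :
    -- (1) odd-degree vertices precede even-degree vertices
    (∀ u w : Fin (r + 1), β u % 2 = 1 → β w % 2 = 0 → u < w)
    -- (2) the σ's of the odd vertices are successive intervals of labels
    ∧ ∃ s : ℕ → ℕ,
        s 0 = r ∧ (∀ i, s (i + 1) ≤ s i)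
        ∧ s ((Finset.univ.filter (fun v : Fin (r + 1) => β v % 2 = 1)).card) = 0
        ∧ (∀ v : Fin (r + 1),
            (v : ℕ) < (Finset.univ.filter (fun v : Fin (r + 1) => β v % 2 = 1)).card →
            Finset.univ.filter (fun a : Fin r => tail a = v)
              = Finset.univ.filter
                  (fun a : Fin r => s ((v : ℕ) + 1) ≤ (a : ℕ) ∧ (a : ℕ) < s (v : ℕ)))
        ∧ (∀ v : Fin (r + 1),
            (Finset.univ.filter (fun v : Fin (r + 1) => β v % 2 = 1)).card ≤ (v : ℕ) →
            Finset.univ.filter (fun a : Fin r => tail a = v) = ∅) := by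
  have hconn' : (spanned tail head fun _ => True).Connected := by
    simpa only [spanned, true_and] using hconn
  have hcard : Nat.card (Fin (r + 1)) = Nat.card (Fin r) + 1 := by simp
  have horder' : IsRecursiveOrder tail head := fun a u w h => horder a u w h.1 h.2
  have hbip : ∀ a b, tail a ≠ head b := fun a b h => by
    have := (hoe a).1
    rw [h, (hoe b).2] at this
    exact zero_ne_one this
  have hodd_lt_even : ∀ u w : Fin (r + 1), β u % 2 = 1 → β w % 2 = 0 → u < w :=
    fun u w hu hw => lt_of_forall_head_ne_of_forall_tail_ne hconn' hcard hsorted₁ horder'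
      (fun c h => by have := (hoe c).2; rw [h] at this; omega)
      (fun c h => by have := (hoe c).1; rw [h] at this; omega)
      (by rintro rfl; omega)
  set O := univ.filter fun v : Fin (r + 1) => β v % 2 = 1
  have hO : IsLowerSet (O : Set (Fin (r + 1))) := fun u w hwu hu => by
    simp only [O, mem_coe, mem_filter, mem_univ, true_and] at hu ⊢
    by_contra hw
    exact (hodd_lt_even u w hu (by omega)).not_ge hwu
  have hodd : ∀ v, β v % 2 = 1 ↔ (v : ℕ) < #O := fun v => by
    rw [← Fin.mem_iff_val_lt_card_of_isLowerSet hO, mem_filter]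
    simp
  have htail : Antitone fun a => (tail a : ℕ) := fun _ _ hcd =>
    tail_antitone hconn' hcard hbip hsorted₁ hsorted₂ horder' hcd
  obtain ⟨s, hs0, hs, hsO, hfiber⟩ :=
    exists_consecutive_fibers_of_antitone htail fun a => (hodd _).1 (hoe a).1
  refine ⟨hodd_lt_even, s, hs0, hs, hsO, fun v _ => ?_, fun v hv => ?_⟩
  · simpa only [Fin.val_inj] using hfiber v
  · exact filter_eq_empty_iff.2 fun a _ h => ((hodd _).1 (hoe a).1).not_ge (h ▸ hv)

/-- sorted odd-even tree structure.  A labeled tree with edge set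
`Fin r` (edge `a` has tail `tail a`, carrying `star'_a ∈ σ(tail a)`, and head
`head a`) and vertex set `Fin (r+1)` indexed by the recursive order, with vertex
degrees `β`.  The odd-even condition makes tails odd-degree and heads even-degree
vertices.  Sortedness: the edges `1,…,a` span a connected subgraph for each `a`, and
each `σ(v) = {a | tail a = v}` is an interval of edge labels.  The indexing by the
recursive order (splitting along the maximal edge puts the tail component first) is
characterized by: if `a` is the largest edge separating `u` from `w` and `u` lies on
the tail side of `a`, then `u` precedes `w`.

Conclusions: (1) every odd-degree vertex precedes every even-degree vertex; (2) with
`o` the number of odd vertices, there are integers `r = s₀ ≥ s₁ ≥ ⋯ ≥ s_o = 0` such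
that `σ(v_i) = {star'_{s_i+1}, …, star'_{s_{i-1}}}` for the `i`-th odd vertex (in
0-based indexing: `σ(v_i) = {a | s_{i+1} ≤ a < s_i}`, labels shifted by one), and
`σ(v_i) = ∅` for `i > o`. -/
theorem sorted_odd_even_tree_structure (r : ℕ)
    (tail head : Fin r → Fin (r + 1)) (β : Fin (r + 1) → ℕ)
    -- the underlying graph is a tree (connected, with `r` loop-free edges)
    (hloop : ∀ a, tail a ≠ head a)
    (hconn : (SimpleGraph.fromRel
        (fun u w => ∃ a, tail a = u ∧ head a = w)).Connected)
    -- odd-even: tails are odd-degree vertices, heads are even-degree vertices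
    (hoe : ∀ a, β (tail a) % 2 = 1 ∧ β (head a) % 2 = 0)
    -- every even-degree vertex has σ(v) = ∅ (is the tail of no edge)
    (heven : ∀ v, β v % 2 = 0 → ∀ a, tail a ≠ v)
    -- sorted (i): the subgraph spanned by the edges `≤ a` is connected
    (hsorted₁ : ∀ a b : Fin r, b ≤ a →
      (SimpleGraph.fromRel
          (fun u w => ∃ c : Fin r, c ≤ a ∧ tail c = u ∧ head c = w)).Reachable
        (tail b) (tail a))
    -- sorted (ii): each σ(v) is an interval of edge labels
    (hsorted₂ : ∀ i j c : Fin r, tail i = tail j → i ≤ c → c ≤ j →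
      tail c = tail i)
    -- recursive order: if `a` is the largest edge separating `u` from `w` and `u`
    -- lies in the tail-side component of `a`, then `u` comes before `w`
    (horder : ∀ (a : Fin r) (u w : Fin (r + 1)),
      ¬ (SimpleGraph.fromRel
          (fun x y => ∃ c : Fin r, c ≠ a ∧ tail c = x ∧ head c = y)).Reachable u w →
      (∀ b : Fin r, a < b →
        (SimpleGraph.fromRel
            (fun x y => ∃ c : Fin r, c ≠ b ∧ tail c = x ∧ head c = y)).Reachable u w) →
      (SimpleGraph.fromRel
          (fun x y => ∃ c : Fin r, c ≠ a ∧ tail c = x ∧ head c = y)).Reachable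
        u (tail a) →
      u < w) :
    -- (1) odd-degree vertices precede even-degree vertices
    (∀ u w : Fin (r + 1), β u % 2 = 1 → β w % 2 = 0 → u < w)
    -- (2) the σ's of the odd vertices are successive intervals of labels
    ∧ ∃ s : ℕ → ℕ,
        s 0 = r ∧ (∀ i, s (i + 1) ≤ s i)
        ∧ s ((Finset.univ.filter (fun v : Fin (r + 1) => β v % 2 = 1)).card) = 0
        ∧ (∀ v : Fin (r + 1),
            (v : ℕ) < (Finset.univ.filter (fun v : Fin (r + 1) => β v % 2 = 1)).card →
            Finset.univ.filter (fun a : Fin r => tail a = v)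
              = Finset.univ.filter
                  (fun a : Fin r => s ((v : ℕ) + 1) ≤ (a : ℕ) ∧ (a : ℕ) < s (v : ℕ)))
        ∧ (∀ v : Fin (r + 1),
            (Finset.univ.filter (fun v : Fin (r + 1) => β v % 2 = 1)).card ≤ (v : ℕ) →
            Finset.univ.filter (fun a : Fin r => tail a = v) = ∅) :=
  sorted_odd_even_tree_structure_general r tail head β hconn hoe hsorted₁ hsorted₂ horder
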